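/- Let K be a field and let D be a finite-dimensional division algebra over K which is central over K and whose dimension over K is p^2 for a prime number p. Then every K-subalgebra B of D with B ≠ D is commutative. -/

import Mathlib

/-!
A subalgebra `E` of `D` is a finite-dimensional domain, hence a division ring, and `D` is free
over it, so `dim_K E` divides `p ^ 2`. A proper subalgebra `B` therefore has dimension `1` or
`p`, and no subalgebra lies strictly between `K` and `B`. For `x ∈ B` this forces `K[x] = K`
or `K[x] = B`, and in either case `x` commutes with all of `B`.
-/

open Module

theorem Nat.eq_one_or_self_of_dvd_sq_of_lt {p a : ℕ} (hp : p.Prime) (hdvd : a ∣ p ^ 2)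
    (hlt : a < p ^ 2) : a = 1 ∨ a = p := by
  obtain ⟨i, hi, rfl⟩ := (Nat.dvd_prime_pow hp).1 hdvd
  interval_cases i
  · exact .inl (pow_zero p)
  · exact .inr (pow_one p)
  · exact absurd hlt (lt_irrefl _)

namespace Subalgebra

variable {K D : Type*} [Field K] [Ring D] [Algebra K D]

theorem commute_of_forall_le_eq_bot_or_eq {B : Subalgebra K D}
    (hB : ∀ E ≤ B, E = ⊥ ∨ E = B) {x y : D} (hx : x ∈ B) (hy : y ∈ B) : Commute x y := by
  rcases hB (Algebra.adjoin K {x}) (Algebra.adjoin_le (Set.singleton_subset_iff.2 hx))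
    with hbot | htop
  · have hxK : x ∈ (⊥ : Subalgebra K D) := hbot ▸ Algebra.self_mem_adjoin_singleton K x
    obtain ⟨k, rfl⟩ := Algebra.mem_bot.1 hxK
    exact Algebra.commute_algebraMap_left k y
  · rw [← htop] at hy
    exact Algebra.commute_of_mem_adjoin_self hy

theorem finrank_lt_of_ne_top [FiniteDimensional K D] {B : Subalgebra K D} (hB : B ≠ ⊤) :
    finrank K B < finrank K D := by
  rw [← finrank_toSubmodule]
  exact Submodule.finrank_lt (mt Algebra.toSubmodule_eq_top.1 hB)

theorem finrank_dvd_finrank [IsDomain D] [FiniteDimensional K D] (E : Subalgebra K D) :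
    finrank K E ∣ finrank K D := by
  let := divisionRingOfFiniteDimensional K E
  exact Dvd.intro _ (finrank_mul_finrank K E D)

theorem eq_bot_or_eq_of_le_of_finrank_eq_sq [IsDomain D] [FiniteDimensional K D] {p : ℕ}
    (hp : p.Prime) (hdim : finrank K D = p ^ 2) {B E : Subalgebra K D} (hB : B ≠ ⊤)
    (hEB : E ≤ B) : E = ⊥ ∨ E = B := by
  have hBlt : finrank K B < p ^ 2 := hdim ▸ finrank_lt_of_ne_top hB
  have hEle : finrank K E ≤ finrank K B := by
    simpa only [finrank_toSubmodule] using Submodule.finrank_mono (toSubmodule.monotone hEB)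
  rcases Nat.eq_one_or_self_of_dvd_sq_of_lt hp (hdim ▸ finrank_dvd_finrank E)
      (hEle.trans_lt hBlt) with hE | hE
  · exact .inl (eq_bot_of_finrank_one hE)
  · rcases Nat.eq_one_or_self_of_dvd_sq_of_lt hp (hdim ▸ finrank_dvd_finrank B) hBlt with hB1 | hBp
    · exact absurd (hE ▸ hB1 ▸ hEle) hp.one_lt.not_ge
    · exact .inr (eq_of_le_of_finrank_eq hEB (hE.trans hBp.symm))

end Subalgebra

theorem proper_subalgebra_commutative_general
    (K D : Type*) [Field K] [DivisionRing D] [Algebra K D] [FiniteDimensional K D]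
    (p : ℕ) (hp : p.Prime) (hdim : Module.finrank K D = p ^ 2)
    (B : Subalgebra K D) (hB : B ≠ ⊤) :
    ∀ x ∈ B, ∀ y ∈ B, x * y = y * x :=
  fun _ hx _ hy => Subalgebra.commute_of_forall_le_eq_bot_or_eq
    (fun _ hEB => Subalgebra.eq_bot_or_eq_of_le_of_finrank_eq_sq hp hdim hB hEB) hx hy

/-- Let `K` be a field and `D` a finite-dimensional central division
algebra over `K` (the center of `D` equals `K`) with `dim_K D = p ^ 2` for a prime `p`.
Then every `K`-subalgebra `B ≠ D` of `D` is commutative. -/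
theorem proper_subalgebra_commutative
    (K D : Type*) [Field K] [DivisionRing D] [Algebra K D] [FiniteDimensional K D]
    (hcenter : Subalgebra.center K D = ⊥)
    (p : ℕ) (hp : p.Prime) (hdim : Module.finrank K D = p ^ 2)
    (B : Subalgebra K D) (hB : B ≠ ⊤) :
    ∀ x ∈ B, ∀ y ∈ B, x * y = y * x :=
  proper_subalgebra_commutative_general K D p hp hdim B hB
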